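/- Let R₁ and R₂ be commutative rings, φ : R₁ → R₂ a surjective ring homomorphism, n ≥ 1, and fix a monomial order on n-variable polynomials. Let Γ be a strong Gröbner basis of an ideal I of R₁[x₁,...,xₙ], and suppose that for every g ∈ Γ the image φ(lc(g)) of its leading coefficient is neither 0 nor a zero divisor in R₂. Then for every nonzero h in the image ideal φ(I) there exists f ∈ I such that φ(f) = h and f has the same leading term as h (i.e. the leading exponent vector of f equals that of h). -/

import Mathlib

/-!
Lift `h` to any `f ∈ I` and push the leading coefficient of `f` out of `ker φ`. If
`φ (lc f) = 0`, pick `g ∈ Γ` with `lc g * c = lc f` and `lt g ∣ lt f`; since `φ (lc g)` is a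
non-zero-divisor, `φ c = 0`, so subtracting `c · (lt f / lt g) · g` keeps `f` in `I` and its
image equal to `h`, while strictly lowering the leading term. The monomial order is
well-founded, so this terminates at a lift whose leading coefficient survives under `φ`,
and such a lift has the same leading term as its image.
-/

open MvPolynomial

variable {R : Type*} [CommRing R] {σ : Type*}

/-- The leading exponent vector (leading term) of a polynomial with respect to a
monomial order: the largest exponent vector with nonzero coefficient. -/
noncomputable def mDegree (m : MonomialOrder σ) (f : MvPolynomial σ R) : σ →₀ ℕ :=
  m.toSyn.symm (f.support.sup fun d => m.toSyn d)

/-- The leading coefficient of a polynomial with respect to a monomial order. -/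
noncomputable def mLeadingCoeff (m : MonomialOrder σ) (f : MvPolynomial σ R) : R :=
  f.coeff (mDegree m f)

/-- `Γ ⊆ I \ {0}` is a strong Gröbner basis of `I` when, for every nonzero `f ∈ I`,
some `g ∈ Γ` has leading monomial `lm(g) = lc(g)·lt(g)` dividing `lm(f)`, i.e. the
leading coefficient of `g` divides that of `f` and the leading exponent vector of `g`
is componentwise `≤` that of `f`. -/
def IsStrongGroebnerBasis (m : MonomialOrder σ) (I : Ideal (MvPolynomial σ R))
    (Γ : Set (MvPolynomial σ R)) : Prop :=
  Γ ⊆ (I : Set (MvPolynomial σ R)) \ {0} ∧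
    ∀ f ∈ I, f ≠ 0 → ∃ g ∈ Γ,
      mLeadingCoeff m g ∣ mLeadingCoeff m f ∧ mDegree m g ≤ mDegree m f

open scoped MonomialOrder nonZeroDivisors

namespace MonomialOrder

variable {m : MonomialOrder σ}

theorem mDegree_eq_degree (f : MvPolynomial σ R) :
    mDegree m f = m.degree f :=
  rfl

theorem degree_map_of_map_leadingCoeff_ne_zero {R₁ R₂ : Type*} [CommRing R₁] [CommRing R₂]
    (φ : R₁ →+* R₂) {f : MvPolynomial σ R₁} (hf : φ (m.leadingCoeff f) ≠ 0) :
    m.degree (map φ f) = m.degree f := by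
  apply m.toSyn.injective
  refine le_antisymm (m.degree_le_iff.mpr fun d hd => m.le_degree (support_map_subset φ f hd)) ?_
  exact m.le_degree (mem_support_iff.mpr (by rwa [coeff_map]))

theorem degree_sub_monomial_mul_lt {f g : MvPolynomial σ R} {c : R}
    (hdeg : m.degree g ≤ m.degree f) (hc : m.leadingCoeff f = m.leadingCoeff g * c)
    (hne : f - monomial (m.degree f - m.degree g) c * g ≠ 0) :
    m.degree (f - monomial (m.degree f - m.degree g) c * g) ≺[m] m.degree f := by
  set e := m.degree f - m.degree g
  have he : e + m.degree g = m.degree f := tsub_add_cancel_of_le hdeg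
  have hmono : m.degree (monomial e c) ≼[m] e := m.degree_monomial_le c
  have hprod : m.degree (monomial e c * g) ≼[m] m.degree f := by
    grw [degree_mul_le, map_add, hmono, ← map_add, he]
  have hcoeff : (f - monomial e c * g).coeff (m.degree f) = 0 := by
    classical
    rw [coeff_sub, ← he, coeff_mul_of_add_of_degree_le hmono le_rfl, he, coeff_monomial,
      if_pos rfl, ← leadingCoeff, ← leadingCoeff, hc, mul_comm, sub_self]
  refine lt_of_le_of_ne (degree_sub_le.trans (sup_le le_rfl hprod)) fun heq => ?_
  rw [← m.toSyn.injective heq] at hcoeff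
  exact hne (m.coeff_degree_eq_zero_iff.mp hcoeff)

end MonomialOrder

open MonomialOrder

theorem IsStrongGroebnerBasis.exists_lift_map_leadingCoeff_ne_zero
    {R₁ R₂ : Type*} [CommRing R₁] [CommRing R₂] (φ : R₁ →+* R₂) {m : MonomialOrder σ}
    {I : Ideal (MvPolynomial σ R₁)} {Γ : Set (MvPolynomial σ R₁)}
    (hΓ : IsStrongGroebnerBasis m I Γ) (hlc : ∀ g ∈ Γ, φ (m.leadingCoeff g) ∈ R₂⁰)
    {f : MvPolynomial σ R₁} (hfI : f ∈ I) (hf : map φ f ≠ 0) :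
    ∃ f' ∈ I, map φ f' = map φ f ∧ φ (m.leadingCoeff f') ≠ 0 := by
  induction hd : m.toSyn (m.degree f) using WellFoundedLT.induction generalizing f with
  | _ d IH =>
    by_cases hφlc : φ (m.leadingCoeff f) = 0
    swap
    · exact ⟨f, hfI, rfl, hφlc⟩
    have hf0 : f ≠ 0 := by rintro rfl; exact hf (map_zero _)
    obtain ⟨g, hgΓ, ⟨c, hc⟩, hdeg⟩ := hΓ.2 f hfI hf0
    have hφc : φ c = 0 := by
      rw [← mul_right_mem_nonZeroDivisors_eq_zero_iff (hlc g hgΓ), mul_comm, ← map_mul]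
      exact hc ▸ hφlc
    set f' := f - monomial (m.degree f - m.degree g) c * g
    have hf'I : f' ∈ I := I.sub_mem hfI (I.mul_mem_left _ (hΓ.1 hgΓ).1)
    have hf'map : map φ f' = map φ f := by simp [f', map_monomial, hφc]
    have hf'0 : f' ≠ 0 := by rintro h0; exact hf (hf'map ▸ h0 ▸ map_zero _)
    obtain ⟨f'', hf''I, hf''map, hf''lc⟩ :=
      IH _ (hd ▸ degree_sub_monomial_mul_lt hdeg hc hf'0) hf'I (hf'map ▸ hf) rfl
    exact ⟨f'', hf''I, hf''map.trans hf'map, hf''lc⟩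

theorem exists_lift_same_leading_term_general
    {R₁ R₂ : Type*} [CommRing R₁] [CommRing R₂]
    (φ : R₁ →+* R₂) (hφ : Function.Surjective φ)
    (n : ℕ) (m : MonomialOrder (Fin n))
    (I : Ideal (MvPolynomial (Fin n) R₁)) (Γ : Set (MvPolynomial (Fin n) R₁))
    (hΓ : IsStrongGroebnerBasis m I Γ)
    (hlc : ∀ g ∈ Γ, φ (mLeadingCoeff m g) ≠ 0 ∧
      φ (mLeadingCoeff m g) ∈ nonZeroDivisors R₂) :
    ∀ h ∈ Ideal.map (MvPolynomial.map φ) I, h ≠ 0 →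
      ∃ f ∈ I, MvPolynomial.map φ f = h ∧ mDegree m f = mDegree m h := by
  intro h hh hh0
  obtain ⟨f₀, hf₀I, rfl⟩ := (Ideal.mem_map_iff_of_surjective _ (map_surjective φ hφ)).mp hh
  obtain ⟨f, hfI, hfmap, hflc⟩ :=
    hΓ.exists_lift_map_leadingCoeff_ne_zero φ (fun g hg => (hlc g hg).2) hf₀I hh0
  refine ⟨f, hfI, hfmap, ?_⟩
  rw [← hfmap, mDegree_eq_degree, mDegree_eq_degree,
    degree_map_of_map_leadingCoeff_ne_zero φ hflc]

/-- Statement in the proof of Proposition 2: under the same hypotheses, every nonzero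
`h` in the image ideal `φ(I)` lifts to some `f ∈ I` with `φ(f) = h` having the same
leading term (leading exponent vector) as `h`. -/
theorem exists_lift_same_leading_term
    {R₁ R₂ : Type*} [CommRing R₁] [CommRing R₂]
    (φ : R₁ →+* R₂) (hφ : Function.Surjective φ)
    (n : ℕ) (hn : 1 ≤ n) (m : MonomialOrder (Fin n))
    (I : Ideal (MvPolynomial (Fin n) R₁)) (Γ : Set (MvPolynomial (Fin n) R₁))
    (hΓ : IsStrongGroebnerBasis m I Γ)
    (hlc : ∀ g ∈ Γ, φ (mLeadingCoeff m g) ≠ 0 ∧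
      φ (mLeadingCoeff m g) ∈ nonZeroDivisors R₂) :
    ∀ h ∈ Ideal.map (MvPolynomial.map φ) I, h ≠ 0 →
      ∃ f ∈ I, MvPolynomial.map φ f = h ∧ mDegree m f = mDegree m h :=
  exists_lift_same_leading_term_general φ hφ n m I Γ hΓ hlc
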